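/- arXiv:2502.05096 — 3 statements merged into one kernel-verified Lean document; each statement's English description precedes it below -/
import Mathlib

section
/- Let (C, C₋, C₊) be a Reedy category. If ([m], X) and ([n], Y) are objects of ∫N^{-,+}(C) whose underlying functors X : [m] → C and Y : [n] → C are identity-reflecting, then for every morphism (α, θ) : ([m], X) → ([n], Y) in ∫N^{-,+}(C) the map α : [m] → [n] is injective. In particular ∫N^{--,+}_+(C) is a full subcategory of ∫N^{-,+}(C). -/
namespace ReedyPaper

open CategoryTheory

universe v₂ u₂ v₁ u₁ v u

variable {C : Type u} [Category.{v} C]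

def IsIdMor {x y : C} (f : x ⟶ y) : Prop := ∃ h : x = y, f = eqToHom h

structure ReedyStruct (C : Type u) [Category.{v} C] where
  neg : MorphismProperty C
  pos : MorphismProperty C
  neg_id : ∀ x : C, neg (𝟙 x)
  pos_id : ∀ x : C, pos (𝟙 x)
  neg_comp : ∀ {x y z : C} (f : x ⟶ y) (g : y ⟶ z), neg f → neg g → neg (f ≫ g)
  pos_comp : ∀ {x y z : C} (f : x ⟶ y) (g : y ⟶ z), pos f → pos g → pos (f ≫ g)
  factor_existsUnique : ∀ {x y : C} (f : x ⟶ y),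
    ∃! t : Σ z : C, (x ⟶ z) × (z ⟶ y), neg t.2.1 ∧ pos t.2.2 ∧ t.2.1 ≫ t.2.2 = f
  wf : WellFounded (fun x y : C =>
    (∃ f : x ⟶ y, pos f ∧ ¬ IsIdMor f) ∨ (∃ f : y ⟶ x, neg f ∧ ¬ IsIdMor f))

structure ChainObj (C : Type u) [Category.{v} C] where
  n : ℕ
  X : Fin (n + 1) ⥤ C

structure ChainHom (P Q : ChainObj C) where
  α : Fin (P.n + 1) →o Fin (Q.n + 1)
  θ : ∀ i : Fin (P.n + 1), P.X.obj i ⟶ Q.X.obj (α i)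
  natural : ∀ {i j : Fin (P.n + 1)} (h : i ≤ j),
    P.X.map (homOfLE h) ≫ θ j = θ i ≫ Q.X.map (homOfLE (α.monotone h))

theorem ChainHom.ext' {P Q : ChainObj C} {f g : ChainHom P Q}
    (hα : f.α = g.α) (hθ : HEq f.θ g.θ) : f = g := by
  cases f; cases g; cases hα; cases hθ; rfl

def ChainHom.id (P : ChainObj C) : ChainHom P P where
  α := OrderHom.id
  θ i := 𝟙 _
  natural h := (Category.comp_id _).trans (Category.id_comp _).symm

def ChainHom.comp {P Q S : ChainObj C} (f : ChainHom P Q) (g : ChainHom Q S) :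
    ChainHom P S where
  α := g.α.comp f.α
  θ i := f.θ i ≫ g.θ (f.α i)
  natural {i j} h := by
    show P.X.map (homOfLE h) ≫ f.θ j ≫ g.θ (f.α j) =
      (f.θ i ≫ g.θ (f.α i)) ≫ S.X.map (homOfLE (g.α.monotone (f.α.monotone h)))
    rw [← Category.assoc, f.natural h, Category.assoc, g.natural (f.α.monotone h),
      ← Category.assoc]

instance : Category (ChainObj C) where
  Hom := ChainHom
  id := ChainHom.id
  comp := ChainHom.comp
  id_comp f := ChainHom.ext' rfl (heq_of_eq (funext fun i => Category.id_comp _))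
  comp_id f := ChainHom.ext' rfl (heq_of_eq (funext fun i => Category.comp_id _))
  assoc f g h := ChainHom.ext' rfl (heq_of_eq (funext fun i => Category.assoc _ _ _))

/-- The partial order on the hom-sets of `∫N(C)` (and of `∫N^{-,+}(C)`):
`(α, θ) ≤ (α', θ')` iff `α ≤ α'` pointwise and `θ'ᵢ = Y(α(i) ≤ α'(i)) ∘ θᵢ` for all `i`. -/
def ChainHom.le {P Q : ChainObj C} (f g : ChainHom P Q) : Prop :=
  (∀ i, f.α i ≤ g.α i) ∧
    ∀ (i : Fin (P.n + 1)) (h : f.α i ≤ g.α i), g.θ i = f.θ i ≫ Q.X.map (homOfLE h)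

theorem ChainHom.le_comp_right {P Q S : ChainObj C} {f f' : P ⟶ Q} (g : Q ⟶ S)
    (h : ChainHom.le f f') : ChainHom.le (f ≫ g) (f' ≫ g) := by
  refine ⟨fun i => g.α.monotone (h.1 i), fun i hi => ?_⟩
  show f'.θ i ≫ g.θ (f'.α i) = (f.θ i ≫ g.θ (f.α i)) ≫ S.X.map (homOfLE hi)
  rw [h.2 i (h.1 i), Category.assoc, g.natural (h.1 i), ← Category.assoc]
  rfl

theorem ChainHom.le_comp_left {P Q S : ChainObj C} (f : P ⟶ Q) {g g' : Q ⟶ S}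
    (h : ChainHom.le g g') : ChainHom.le (f ≫ g) (f ≫ g') := by
  refine ⟨fun i => h.1 (f.α i), fun i hi => ?_⟩
  show f.θ i ≫ g'.θ (f.α i) = (f.θ i ≫ g.θ (f.α i)) ≫ S.X.map (homOfLE hi)
  rw [h.2 (f.α i) (h.1 (f.α i)), ← Category.assoc]
  rfl

/-- Objects of `∫N^{-,+}(C)`: chains all of whose morphisms lie in `C₋`. -/
structure NegObj (R : ReedyStruct C) where
  n : ℕ
  X : Fin (n + 1) ⥤ C
  negMap : ∀ {i j : Fin (n + 1)} (h : i ≤ j), R.neg (X.map (homOfLE h))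

variable {R : ReedyStruct C}

/-- The underlying object of `∫N(C)`. -/
def NegObj.chain (P : NegObj R) : ChainObj C := ⟨P.n, P.X⟩

/-- Morphisms of `∫N^{-,+}(C)`: morphisms of `∫N(C)` all of whose components lie in `C₊`. -/
def NegHomT (P Q : NegObj R) : Type v :=
  { f : P.chain ⟶ Q.chain // ∀ i, R.pos (f.θ i) }

def NegHomT.id (P : NegObj R) : NegHomT P P := ⟨𝟙 P.chain, fun _ => R.pos_id _⟩

def NegHomT.comp {P Q S : NegObj R} (f : NegHomT P Q) (g : NegHomT Q S) : NegHomT P S :=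
  ⟨f.1 ≫ g.1, fun i => by
    show R.pos (f.1.θ i ≫ g.1.θ (f.1.α i))
    exact R.pos_comp _ _ (f.2 i) (g.2 _)⟩

theorem NegHomT.id_comp {P Q : NegObj R} (f : NegHomT P Q) : (NegHomT.id P).comp f = f := by
  apply Subtype.ext
  show 𝟙 P.chain ≫ f.1 = f.1
  exact Category.id_comp f.1

theorem NegHomT.comp_id {P Q : NegObj R} (f : NegHomT P Q) : f.comp (NegHomT.id Q) = f := by
  apply Subtype.ext
  show f.1 ≫ 𝟙 Q.chain = f.1
  exact Category.comp_id f.1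

theorem NegHomT.comp_assoc {P Q S T : NegObj R} (f : NegHomT P Q) (g : NegHomT Q S)
    (h : NegHomT S T) : (f.comp g).comp h = f.comp (g.comp h) := by
  apply Subtype.ext
  show (f.1 ≫ g.1) ≫ h.1 = f.1 ≫ (g.1 ≫ h.1)
  exact Category.assoc f.1 g.1 h.1

/-- The category `∫N^{-,+}(C)`. -/
instance : Category (NegObj R) where
  Hom := NegHomT
  id := NegHomT.id
  comp := NegHomT.comp
  id_comp := NegHomT.id_comp
  comp_id := NegHomT.comp_id
  assoc := NegHomT.comp_assoc

/-- The order on the hom-sets of `∫N^{-,+}(C)`. -/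
def NegHom.le {P Q : NegObj R} (f g : P ⟶ Q) : Prop := ChainHom.le f.1 g.1

/-- The equivalence relation `∼` on the hom-sets of `∫N^{-,+}(C)`: the
symmetric-transitive closure of `≤`. -/
def NegHom.equiv {P Q : NegObj R} (f g : P ⟶ Q) : Prop :=
  Relation.EqvGen (fun a b : P ⟶ Q => NegHom.le a b) f g

theorem NegHom.le_comp_right {P Q S : NegObj R} {f f' : P ⟶ Q} (g : Q ⟶ S)
    (h : NegHom.le f f') : NegHom.le (f ≫ g) (f' ≫ g) :=
  ChainHom.le_comp_right g.1 h

theorem NegHom.le_comp_left {P Q S : NegObj R} (f : P ⟶ Q) {g g' : Q ⟶ S}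
    (h : NegHom.le g g') : NegHom.le (f ≫ g) (f ≫ g') :=
  ChainHom.le_comp_left f.1 h

/-- Identity-reflectingness of a chain. -/
def NegObj.IdRefl (P : NegObj R) : Prop :=
  ∀ {i j : Fin (P.n + 1)} (h : i ≤ j), IsIdMor (P.X.map (homOfLE h)) → i = j

/-- Objects of `∫N^{--,+}_+(C)`: identity-reflecting chains in `C₋`. -/
structure StrictObj (R : ReedyStruct C) where
  toNegObj : NegObj R
  idRefl : toNegObj.IdRefl

/-- Morphisms of `∫N^{--,+}_+(C)`: morphisms of `∫N^{-,+}(C)` with `α` injective. -/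
def StrictHomT (P Q : StrictObj R) : Type v :=
  { f : P.toNegObj ⟶ Q.toNegObj // Function.Injective f.1.α }

def StrictHomT.id (P : StrictObj R) : StrictHomT P P :=
  ⟨𝟙 P.toNegObj, fun _ _ h => h⟩

def StrictHomT.comp {P Q S : StrictObj R} (f : StrictHomT P Q) (g : StrictHomT Q S) :
    StrictHomT P S :=
  ⟨f.1 ≫ g.1, fun _ _ h => f.2 (g.2 h)⟩

/-- The category `∫N^{--,+}_+(C)`. -/
instance : Category (StrictObj R) where
  Hom := StrictHomT
  id := StrictHomT.id
  comp := StrictHomT.comp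
  id_comp f := Subtype.ext (Category.id_comp f.1)
  comp_id f := Subtype.ext (Category.comp_id f.1)
  assoc f g h := Subtype.ext (Category.assoc f.1 g.1 h.1)

/-- The order on the hom-sets of `∫N^{--,+}_+(C)`. -/
def StrictHom.le {P Q : StrictObj R} (f g : P ⟶ Q) : Prop := NegHom.le f.1 g.1

/-- The equivalence relation `∼` on the hom-sets of `∫N^{--,+}_+(C)`. -/
def StrictHom.equiv {P Q : StrictObj R} (f g : P ⟶ Q) : Prop :=
  Relation.EqvGen (fun a b : P ⟶ Q => StrictHom.le a b) f g

theorem StrictHom.le_comp_right {P Q S : StrictObj R} {f f' : P ⟶ Q} (g : Q ⟶ S)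
    (h : StrictHom.le f f') : StrictHom.le (f ≫ g) (f' ≫ g) :=
  NegHom.le_comp_right g.1 h

theorem StrictHom.le_comp_left {P Q S : StrictObj R} (f : P ⟶ Q) {g g' : Q ⟶ S}
    (h : StrictHom.le g g') : StrictHom.le (f ≫ g) (f ≫ g') :=
  NegHom.le_comp_left f.1 h

/-- Objects of `Down_*(C)`: the same as those of `∫N^{-,+}(C)`. -/
structure DownStar (R : ReedyStruct C) where
  obj : NegObj R

/-- The category `Down_*(C)`: hom-sets are the quotients of those of `∫N^{-,+}(C)`
by the symmetric-transitive closure of `≤`. -/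
instance : Category (DownStar R) where
  Hom P Q := Quot (fun f g : P.obj ⟶ Q.obj => NegHom.le f g)
  id P := Quot.mk _ (𝟙 P.obj)
  comp {P Q S} f g :=
    Quot.lift
      (fun f' => Quot.lift (fun g' => Quot.mk _ (f' ≫ g'))
        (fun _ _ hg => Quot.sound (NegHom.le_comp_left f' hg)) g)
      (fun f₁ f₂ hf => Quot.inductionOn g (fun g' =>
        Quot.sound (NegHom.le_comp_right g' hf))) f
  id_comp f := Quot.inductionOn f fun f' => congrArg (Quot.mk _) (Category.id_comp f')
  comp_id f := Quot.inductionOn f fun f' => congrArg (Quot.mk _) (Category.comp_id f')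
  assoc f g h :=
    Quot.inductionOn f fun f' => Quot.inductionOn g fun g' => Quot.inductionOn h fun h' =>
      congrArg (Quot.mk _) (Category.assoc f' g' h')

/-- Objects of `Down(C)`: the same as those of `∫N^{--,+}_+(C)`. -/
structure Down (R : ReedyStruct C) where
  obj : StrictObj R

/-- The category `Down(C)`: hom-sets are the quotients of those of `∫N^{--,+}_+(C)`
by the symmetric-transitive closure of `≤`. -/
instance : Category (Down R) where
  Hom P Q := Quot (fun f g : P.obj ⟶ Q.obj => StrictHom.le f g)
  id P := Quot.mk _ (𝟙 P.obj)
  comp {P Q S} f g :=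
    Quot.lift
      (fun f' => Quot.lift (fun g' => Quot.mk _ (f' ≫ g'))
        (fun _ _ hg => Quot.sound (StrictHom.le_comp_left f' hg)) g)
      (fun f₁ f₂ hf => Quot.inductionOn g (fun g' =>
        Quot.sound (StrictHom.le_comp_right g' hf))) f
  id_comp f := Quot.inductionOn f fun f' => congrArg (Quot.mk _) (Category.id_comp f')
  comp_id f := Quot.inductionOn f fun f' => congrArg (Quot.mk _) (Category.comp_id f')
  assoc f g h :=
    Quot.inductionOn f fun f' => Quot.inductionOn g fun g' => Quot.inductionOn h fun h' =>
      congrArg (Quot.mk _) (Category.assoc f' g' h')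

/-- The quotient functor `∫N^{-,+}(C) → Down_*(C)`. -/
def qStar (R : ReedyStruct C) : NegObj R ⥤ DownStar R where
  obj P := ⟨P⟩
  map f := Quot.mk _ f
  map_id _ := rfl
  map_comp _ _ := rfl

/-- The inclusion functor `Down(C) → Down_*(C)`. -/
def downInclusion (R : ReedyStruct C) : Down R ⥤ DownStar R where
  obj P := ⟨P.obj.toNegObj⟩
  map {P Q} f :=
    Quot.lift (fun f' : P.obj ⟶ Q.obj => Quot.mk _ f'.1) (fun _ _ h => Quot.sound h) f
  map_id _ := rfl
  map_comp {P Q S} f g := by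
    induction f using Quot.ind
    induction g using Quot.ind
    rfl

/-- The last-component functor `∫N(C) → C`. -/
def lastChain : ChainObj C ⥤ C where
  obj P := P.X.obj (Fin.last P.n)
  map {P Q} f := f.θ (Fin.last P.n) ≫ Q.X.map (homOfLE (Fin.le_last (f.α (Fin.last P.n))))
  map_id P := by
    show 𝟙 (P.X.obj (Fin.last P.n)) ≫ P.X.map (homOfLE (Fin.le_last (Fin.last P.n))) = 𝟙 _
    rw [Category.id_comp]
    exact P.X.map_id _
  map_comp {P Q S} f g := by
    show (f.θ (Fin.last P.n) ≫ g.θ (f.α (Fin.last P.n))) ≫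
        S.X.map (homOfLE (Fin.le_last (g.α (f.α (Fin.last P.n))))) =
      (f.θ (Fin.last P.n) ≫ Q.X.map (homOfLE (Fin.le_last (f.α (Fin.last P.n))))) ≫
        g.θ (Fin.last Q.n) ≫ S.X.map (homOfLE (Fin.le_last (g.α (Fin.last Q.n))))
    rw [Category.assoc, Category.assoc, ← Category.assoc (Q.X.map _),
      g.natural (Fin.le_last (f.α (Fin.last P.n))), Category.assoc, ← Functor.map_comp,
      homOfLE_comp]

theorem lastChain_eq_of_le {P Q : ChainObj C} {f g : P ⟶ Q} (h : ChainHom.le f g) :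
    lastChain.map f = lastChain.map g := by
  show f.θ (Fin.last P.n) ≫ Q.X.map (homOfLE (Fin.le_last (f.α (Fin.last P.n)))) =
    g.θ (Fin.last P.n) ≫ Q.X.map (homOfLE (Fin.le_last (g.α (Fin.last P.n))))
  rw [h.2 (Fin.last P.n) (h.1 (Fin.last P.n)), Category.assoc, ← Functor.map_comp,
    homOfLE_comp]

/-- The forgetful functor `∫N^{-,+}(C) → ∫N(C)`. -/
def negForget (R : ReedyStruct C) : NegObj R ⥤ ChainObj C where
  obj P := P.chain
  map f := f.1
  map_id _ := rfl
  map_comp _ _ := rfl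

/-- The last-component functor `∫N^{-,+}(C) → C`. -/
def lastNeg (R : ReedyStruct C) : NegObj R ⥤ C := negForget R ⋙ lastChain

/-- The forgetful functor `∫N^{--,+}_+(C) → ∫N^{-,+}(C)`. -/
def strictForget (R : ReedyStruct C) : StrictObj R ⥤ NegObj R where
  obj P := P.toNegObj
  map f := f.1
  map_id _ := rfl
  map_comp _ _ := rfl

/-- The last-component functor `∫N^{--,+}_+(C) → C`. -/
def lastStrict (R : ReedyStruct C) : StrictObj R ⥤ C := strictForget R ⋙ lastNeg R

/-- The last-component functor `Down_*(C) → C`. -/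
def lastDownStar (R : ReedyStruct C) : DownStar R ⥤ C where
  obj P := (lastNeg R).obj P.obj
  map {P Q} f :=
    Quot.lift (fun f' : P.obj ⟶ Q.obj => (lastNeg R).map f')
      (fun _ _ h => lastChain_eq_of_le h) f
  map_id P := (lastNeg R).map_id P.obj
  map_comp {P Q S} f g := by
    induction f using Quot.ind
    induction g using Quot.ind
    exact (lastNeg R).map_comp _ _

/-- The last-component functor `Down(C) → C`. -/
def lastDown (R : ReedyStruct C) : Down R ⥤ C where
  obj P := (lastStrict R).obj P.obj
  map {P Q} f :=
    Quot.lift (fun f' : P.obj ⟶ Q.obj => (lastStrict R).map f')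
      (fun _ _ h => lastChain_eq_of_le h) f
  map_id P := (lastStrict R).map_id P.obj
  map_comp {P Q S} f g := by
    induction f using Quot.ind
    induction g using Quot.ind
    exact (lastStrict R).map_comp _ _

/-- The wide subcategory `Γ₋` of `∫N^{-,+}(C)`: morphisms of the form
`(σ, id) : ([m], X ∘ σ) → ([n], X)` with `σ` surjective, i.e. morphisms whose simplicial
component is surjective and all of whose components are identities. -/
def GammaNeg (R : ReedyStruct C) {P Q : NegObj R} (f : P ⟶ Q) : Prop :=
  Function.Surjective f.1.α ∧ ∀ i, IsIdMor (f.1.θ i)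

/-- The wide subcategory `Γ₊` of `∫N^{-,+}(C)`: morphisms `(δ, θ)` with `δ` injective. -/
def GammaPos (R : ReedyStruct C) {P Q : NegObj R} (f : P ⟶ Q) : Prop :=
  Function.Injective f.1.α

/-- Whiskering (precomposition) with `lastF` is bijective on natural transformations
between functors out of `C`. -/
def WhiskerUnique {Γ : Type u₁} [Category.{v₁} Γ] (lastF : Γ ⥤ C) : Prop :=
  ∀ {D : Type u₂} [Category.{v₂} D] (F G : C ⥤ D)
    (ε : lastF ⋙ F ⟶ lastF ⋙ G), ∃! ε' : F ⟶ G, Functor.whiskerLeft lastF ε' = ε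

/-- `lastF : Γ ⥤ C` is a weak 1-localization of `Γ` at the `last`-weak equivalences
(the morphisms sent by `lastF` to identities). -/
def IsWeakLocalizationAtLastWeq {Γ : Type u₁} [Category.{v₁} Γ] (lastF : Γ ⥤ C) : Prop :=
  (∀ {P Q : Γ} (f : P ⟶ Q), IsIdMor (lastF.map f) → IsIso (lastF.map f)) ∧
  (∀ {E : Type u₂} [Category.{v₂} E] (G : Γ ⥤ E),
    (∀ {P Q : Γ} (f : P ⟶ Q), IsIdMor (lastF.map f) → IsIso (G.map f)) →
    ∃ H : C ⥤ E, Nonempty (lastF ⋙ H ≅ G)) ∧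
  (∀ {E : Type u₂} [Category.{v₂} E] (H H' : C ⥤ E) (θ : lastF ⋙ H ≅ lastF ⋙ H'),
    ∃! θ' : H ≅ H', Functor.isoWhiskerLeft lastF θ' = θ)

/- The whole argument: if `α i = α j` for `i ≤ j`, naturality exhibits
`(X(i ≤ j), θ_j)` as a `(C₋, C₊)`-factorization of `θ_i ∈ C₊`, which also has the trivial
factorization `(id, θ_i)`; uniqueness makes `X(i ≤ j)` an identity, so `i = j`. -/

theorem ReedyStruct.pos_eqToHom (R : ReedyStruct C) {x y : C} (e : x = y) :
    R.pos (eqToHom e) := by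
  subst e
  exact R.pos_id x

theorem ReedyStruct.isIdMor_of_neg_of_pos_comp (R : ReedyStruct C) {x y z : C}
    {g : x ⟶ y} {p : y ⟶ z} (hg : R.neg g) (hp : R.pos p) (hgp : R.pos (g ≫ p)) :
    IsIdMor g := by
  obtain ⟨t, -, huniq⟩ := R.factor_existsUnique (g ≫ p)
  have htriv : (⟨x, 𝟙 x, g ≫ p⟩ : Σ w : C, (x ⟶ w) × (w ⟶ z)) = t :=
    huniq _ ⟨R.neg_id x, hgp, Category.id_comp _⟩
  have hgiven : (⟨y, g, p⟩ : Σ w : C, (x ⟶ w) × (w ⟶ z)) = t := huniq _ ⟨hg, hp, rfl⟩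
  obtain ⟨rfl, hpair⟩ := Sigma.mk.inj_iff.mp (htriv.trans hgiven.symm)
  exact ⟨rfl, (Prod.mk.inj (eq_of_heq hpair)).1.symm⟩

theorem map_homOfLE_of_eq {ι : Type*} [Preorder ι] (F : ι ⥤ C) {i j : ι} (h : i ≤ j)
    (e : i = j) : F.map (homOfLE h) = eqToHom (congrArg F.obj e) := by
  subst e
  exact (congrArg F.map (Subsingleton.elim _ _)).trans (F.map_id i)

theorem NegHomT.isIdMor_map_of_α_eq {P Q : NegObj R} (f : P ⟶ Q) {i j : Fin (P.n + 1)}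
    (hij : i ≤ j) (e : f.1.α i = f.1.α j) : IsIdMor (P.X.map (homOfLE hij)) := by
  have hθ : R.pos (P.X.map (homOfLE hij) ≫ f.1.θ j) := by
    have hnat : P.X.map (homOfLE hij) ≫ f.1.θ j = f.1.θ i ≫ Q.X.map (homOfLE _) :=
      f.1.natural hij
    rw [hnat, map_homOfLE_of_eq Q.X _ e]
    exact R.pos_comp _ _ (f.2 i) (R.pos_eqToHom _)
  exact R.isIdMor_of_neg_of_pos_comp (P.negMap hij) (f.2 j) hθ

section Statements

variable (R : ReedyStruct C)

theorem statement1 {P Q : NegObj R} (hP : P.IdRefl) (f : P ⟶ Q) :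
    Function.Injective f.1.α :=
  StrictMono.injective fun _ _ hij =>
    (f.1.α.monotone hij.le).lt_of_ne fun e => hij.ne (hP hij.le (f.isIdMor_map_of_α_eq hij.le e))

end Statements

end ReedyPaper
end

section
/- Let (C, C₋, C₊) be a Reedy category and (α, θ) : ([m], X) → ([n], Y) a morphism in ∫N^{-,+}(C). Then the map sending a morphism (β, φ) with (α, θ) ≤ (β, φ) to β, from the set {(β, φ) : (α, θ) ≤ (β, φ)} (ordered by ≤) to the set {β : [m] → [n] in Δ with α ≤ β pointwise} (ordered pointwise), is injective and order-reflecting: if (β, φ) and (β', φ') both lie above (α, θ) and β ≤ β' pointwise, then (β, φ) ≤ (β', φ'). -/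
namespace ReedyPaper

open CategoryTheory

universe v₂ u₂ v₁ u₁ v u

variable {C : Type u} [Category.{v} C]

variable {R : ReedyStruct C}

theorem ChainHom.le_antisymm {P Q : ChainObj C} {f g : ChainHom P Q} (hfg : f.le g)
    (hgf : g.le f) : f = g := by
  obtain ⟨α, θ, _⟩ := f
  obtain ⟨α', θ', _⟩ := g
  obtain rfl : α = α' :=
    OrderHom.ext _ _ (funext fun i => _root_.le_antisymm (hfg.1 i) (hgf.1 i))
  refine ChainHom.ext' rfl (heq_of_eq (funext fun i => ?_))
  simpa using (hfg.2 i (hfg.1 i)).symm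

theorem ChainHom.le_of_α_le {P Q : ChainObj C} {f g g' : ChainHom P Q} (hg : f.le g)
    (hg' : f.le g') (hα : ∀ i, g.α i ≤ g'.α i) : g.le g' := by
  refine ⟨hα, fun i hi => ?_⟩
  rw [hg'.2 i (hg'.1 i), hg.2 i (hg.1 i), Category.assoc, ← Functor.map_comp, homOfLE_comp]

section Statements

variable (R : ReedyStruct C)

theorem statement2 {P Q : NegObj R} (f : P ⟶ Q) :
    (∀ g g' : P ⟶ Q, NegHom.le f g → NegHom.le f g' → g.1.α = g'.1.α → g = g') ∧
    (∀ g g' : P ⟶ Q, NegHom.le f g → NegHom.le f g' →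
      (∀ i, g.1.α i ≤ g'.1.α i) → NegHom.le g g') := by
  refine ⟨fun g g' hg hg' hα => Subtype.ext ?_, fun g g' hg hg' => ChainHom.le_of_α_le hg hg'⟩
  exact ChainHom.le_antisymm (ChainHom.le_of_α_le hg hg' fun i => by rw [hα])
    (ChainHom.le_of_α_le hg' hg fun i => by rw [hα])

end Statements

end ReedyPaper
end

section
/- Let (C, C₋, C₊) be a Reedy category and ([m], X), ([n], Y) objects of ∫N^{-,+}(C). Then every ∼-equivalence class in the hom-set Hom(([m], X), ([n], Y)) possesses a maximum with respect to ≤: an element of the class that is ≥ every element of the class. -/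
namespace ReedyPaper

open CategoryTheory

universe v₂ u₂ v₁ u₁ v u

variable {C : Type u} [Category.{v} C]

variable {R : ReedyStruct C}

/-! In an `∼`-class any two morphisms have a common upper bound, because the pointwise maximum
of two morphisms above a common one is again a morphism of `∫N^{-,+}(C)`: each of its components
is one of the two given components. A morphism of the class whose simplicial part is maximal
(there are finitely many simplicial parts) is therefore above every member of the class. -/

namespace ChainHom

variable {P Q : ChainObj C}

theorem le.refl (f : P ⟶ Q) : ChainHom.le f f :=
  ⟨fun _ => le_rfl, fun i hi => by
    rw [show homOfLE hi = 𝟙 (f.α i) from Subsingleton.elim _ _,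
      CategoryTheory.Functor.map_id, Category.comp_id]⟩

theorem le.trans {f g h : P ⟶ Q} (hfg : ChainHom.le f g) (hgh : ChainHom.le g h) :
    ChainHom.le f h :=
  ⟨fun i => (hfg.1 i).trans (hgh.1 i), fun i hi => by
    rw [hgh.2 i (hgh.1 i), hfg.2 i (hfg.1 i), Category.assoc, ← Functor.map_comp, homOfLE_comp]⟩

theorem le_of_le_of_α_le {f g : P ⟶ Q} (hfg : ChainHom.le f g) (hα : ∀ i, g.α i ≤ f.α i) :
    ChainHom.le g f :=
  ⟨hα, fun i hi => by
    rw [hfg.2 i (hfg.1 i), Category.assoc, ← Functor.map_comp, homOfLE_comp,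
      show homOfLE ((hfg.1 i).trans hi) = 𝟙 (f.α i) from Subsingleton.elim _ _,
      CategoryTheory.Functor.map_id, Category.comp_id]⟩

def raise (f : P ⟶ Q) (β : Fin (P.n + 1) →o Fin (Q.n + 1)) (hβ : ∀ i, f.α i ≤ β i) :
    P ⟶ Q where
  α := β
  θ i := f.θ i ≫ Q.X.map (homOfLE (hβ i))
  natural {i j} hij := by
    rw [← Category.assoc, f.natural hij, Category.assoc, ← Functor.map_comp, homOfLE_comp,
      Category.assoc, ← Functor.map_comp, homOfLE_comp]

theorem le_raise_of_le {f g : P ⟶ Q} (hfg : ChainHom.le f g) {β : Fin (P.n + 1) →o Fin (Q.n + 1)}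
    (hβ : ∀ i, f.α i ≤ β i) (hgβ : ∀ i, g.α i ≤ β i) : ChainHom.le g (f.raise β hβ) :=
  ⟨hgβ, fun i hi => by
    show f.θ i ≫ Q.X.map (homOfLE (hβ i)) = g.θ i ≫ Q.X.map (homOfLE hi)
    rw [hfg.2 i (hfg.1 i), Category.assoc, ← Functor.map_comp, homOfLE_comp]
    rfl⟩

end ChainHom

namespace NegHom

variable {P Q : NegObj R}

/- `b` is a free variable (rather than `g.1.α i`) so that `pos_comp_map_of_le` applies to
components whose target is only propositionally equal to that of `g`. -/
theorem pos_comp_map_of_le {f g : P ⟶ Q} (hfg : NegHom.le f g) (i : Fin (P.n + 1))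
    {b : Fin (Q.n + 1)} (hb : f.1.α i ≤ b) (hbg : b = g.1.α i) :
    R.pos (f.1.θ i ≫ Q.X.map (homOfLE hb)) := by
  subst hbg
  have hg := g.2 i
  rw [hfg.2 i hb] at hg
  exact hg

theorem exists_le_of_le_of_le {f g₁ g₂ : P ⟶ Q} (h₁ : NegHom.le f g₁) (h₂ : NegHom.le f g₂) :
    ∃ g : P ⟶ Q, NegHom.le g₁ g ∧ NegHom.le g₂ g := by
  have hβ : ∀ i, f.1.α i ≤ (g₁.1.α ⊔ g₂.1.α) i := fun i => (h₁.1 i).trans le_sup_left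
  refine ⟨⟨f.1.raise _ hβ, fun i => ?_⟩, ChainHom.le_raise_of_le h₁ hβ fun _ => le_sup_left,
    ChainHom.le_raise_of_le h₂ hβ fun _ => le_sup_right⟩
  rcases le_total (g₁.1.α i) (g₂.1.α i) with h | h
  · exact pos_comp_map_of_le h₂ i (hβ i) (sup_eq_right.2 h)
  · exact pos_comp_map_of_le h₁ i (hβ i) (sup_eq_left.2 h)

theorem join_of_equiv {f g : P ⟶ Q} (h : NegHom.equiv f g) : Relation.Join NegHom.le f g := by
  have : IsPreorder (P ⟶ Q) NegHom.le :=
    { refl := fun f => ChainHom.le.refl f.1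
      trans := fun _ _ _ => ChainHom.le.trans }
  have hjoin := Relation.equivalence_join (r := NegHom.le (P := P) (Q := Q))
    fun _ _ _ => exists_le_of_le_of_le
  exact hjoin.eqvGen_iff.1 (Relation.EqvGen.mono (fun a b hab => ⟨b, hab, refl b⟩) _ _ h)

end NegHom

section Statements

variable (R : ReedyStruct C)

theorem statement8 {P Q : NegObj R} (f : P ⟶ Q) :
    ∃ m : P ⟶ Q, NegHom.equiv f m ∧ ∀ g : P ⟶ Q, NegHom.equiv f g → NegHom.le g m := by
  obtain ⟨m, hfm, hm_max⟩ := Set.Finite.exists_maximalFor' (fun g : P ⟶ Q => ⇑g.1.α)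
    {g | NegHom.equiv f g} (Set.toFinite _) ⟨f, .refl f⟩
  refine ⟨m, hfm, fun g hfg => ?_⟩
  obtain ⟨u, hmu, hgu⟩ := NegHom.join_of_equiv (.trans _ _ _ (.symm _ _ hfm) hfg)
  have hum : ∀ i, u.1.α i ≤ m.1.α i :=
    hm_max (.trans _ _ _ hfm (.rel _ _ hmu)) hmu.1
  exact ChainHom.le.trans hgu (ChainHom.le_of_le_of_α_le hmu hum)

end Statements

end ReedyPaper
end
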